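/- arXiv:1603.08883 — 2 statements merged into one kernel-verified Lean document; each statement's English description precedes it below -/
import Mathlib

section
/- Let G be a finite simple graph on N vertices, let C ≥ 1 be an integer, and let S₀ be a decycling set of G. Then there exists a C-dismantling set S of G with S₀ ⊆ S and (C+1)·(|S| − |S₀|) ≤ N. In particular, the minimal size of a C-dismantling set is at most the minimal size of a decycling set plus N/(C+1). -/
/-!
Removing `S₀` leaves a forest `F`. Among the components of the forests `F - u` with more than `C`
vertices choose one, `X`, of minimum size; by acyclicity `u` has at most one neighbour `w` in `X`
(if it has none, let `w ∈ X` be arbitrary; if no such `X` exists, any vertex `w` of a component `X`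
of `F` with more than `C` vertices will do). Every component of `F - w` meeting `X ∖ {w}` then lies in
`X ∖ {w}`, hence has at most `C` vertices by minimality. So deleting `w` lowers the number of
vertices lying in components with more than `C` vertices by at least `C + 1`, and that number
starts at most `N`.
-/

open Finset SimpleGraph

namespace SimpleGraph

variable {V : Type*} (G : SimpleGraph V)

def ReachableIn (A : Finset V) (x y : V) : Prop :=
  ∃ p : G.Walk x y, ∀ z ∈ p.support, z ∈ A

variable {G}

namespace ReachableIn

variable {A B : Finset V} {x y z : V}

lemma refl (hx : x ∈ A) : G.ReachableIn A x x := ⟨.nil, by simpa using hx⟩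

lemma symm : G.ReachableIn A x y → G.ReachableIn A y x
  | ⟨p, hp⟩ => ⟨p.reverse, fun z hz => hp z (by simpa using hz)⟩

lemma trans : G.ReachableIn A x y → G.ReachableIn A y z → G.ReachableIn A x z
  | ⟨p, hp⟩, ⟨q, hq⟩ =>
    ⟨p.append q, fun u hu => ((Walk.mem_support_append_iff _ _).1 hu).elim (hp u) (hq u)⟩

lemma mono (hAB : A ⊆ B) : G.ReachableIn A x y → G.ReachableIn B x y
  | ⟨p, hp⟩ => ⟨p, fun z hz => hAB (hp z hz)⟩

lemma mem_left : G.ReachableIn A x y → x ∈ A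
  | ⟨p, hp⟩ => hp _ p.start_mem_support

lemma mem_right : G.ReachableIn A x y → y ∈ A
  | ⟨p, hp⟩ => hp _ p.end_mem_support

lemma of_mem_support [DecidableEq V] {p : G.Walk x y} (hp : ∀ z ∈ p.support, z ∈ A)
    (hz : z ∈ p.support) : G.ReachableIn A x z :=
  ⟨p.takeUntil z hz, fun u hu => hp u (p.support_takeUntil_subset_support hz hu)⟩

lemma exists_isPath [DecidableEq V] :
    G.ReachableIn A x y → ∃ p : G.Walk x y, p.IsPath ∧ ∀ z ∈ p.support, z ∈ A
  | ⟨p, hp⟩ =>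
    ⟨p.bypass, p.bypass_isPath, fun z hz => hp z (p.support_bypass_subset_support hz)⟩

lemma exists_adj_reachableIn_erase [DecidableEq V] (h : G.ReachableIn A x y) (hne : x ≠ y) :
    ∃ v, G.Adj x v ∧ G.ReachableIn (A.erase x) v y := by
  obtain ⟨p, hpath, hp⟩ := h.exists_isPath
  cases p with
  | nil => exact absurd rfl hne
  | cons hadj q =>
    refine ⟨_, hadj, q, fun z hz => mem_erase.2 ⟨?_, hp z (List.mem_cons_of_mem _ hz)⟩⟩
    rintro rfl
    exact ((Walk.cons_isPath_iff _ _).1 hpath).2 hz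

end ReachableIn

lemma reachable_induce_iff_reachableIn {A : Finset V} {x y : (A : Set V)} :
    (G.induce A).Reachable x y ↔ G.ReachableIn A x y := by
  constructor
  · rintro ⟨p⟩
    refine ⟨p.map (Embedding.induce _).toHom, fun z hz => ?_⟩
    change z ∈ (p.map (Embedding.induce _).toHom).support at hz
    rw [Walk.support_map, List.mem_map] at hz
    obtain ⟨z, -, rfl⟩ := hz
    exact z.2
  · rintro ⟨p, hp⟩
    exact ⟨p.induce _ hp⟩

lemma eq_of_adj_of_reachableIn_erase [DecidableEq V] {A : Finset V} {u v w : V}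
    (hA : (G.induce (A : Set V)).IsAcyclic) (hu : u ∈ A) (huv : G.Adj u v) (huw : G.Adj u w)
    (hvw : G.ReachableIn (A.erase u) v w) : v = w := by
  obtain ⟨q, hq, hqA⟩ := hvw.exists_isPath
  have hpath : (q.cons huv).IsPath := hq.cons fun h => (mem_erase.1 (hqA u h)).1 rfl
  have hpA : ∀ z ∈ (q.cons huv).support, z ∈ (A : Set V) := by
    simp only [Walk.support_cons, List.mem_cons, forall_eq_or_imp]
    exact ⟨hu, fun z hz => mem_of_mem_erase (hqA z hz)⟩
  have hw : (⟨w, hpA _ (q.cons huv).end_mem_support⟩ : (A : Set V)) ∈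
      ((q.cons huv).induce _ hpA).support := by
    simp
  have hlift : ((q.cons huv).induce _ hpA).IsPath := by
    rw [← Walk.isPath_map_iff_of_injective (f := (Embedding.induce _).toHom)
      Subtype.val_injective, Walk.map_induce]
    exact hpath
  have := hA.eq_snd_of_adj_start hlift (induce_adj.2 huw) hw
  simpa using congrArg Subtype.val this.symm

section Components

variable [Fintype V] {A B : Finset V} {x y z : V}

variable (G) in
open Classical in
noncomputable def componentIn (A : Finset V) (x : V) : Finset V := {y | G.ReachableIn A x y}

variable (G) in
noncomputable def largeComponentVerts (C : ℕ) (A : Finset V) : Finset V :=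
  {x | C < #(G.componentIn A x)}

lemma mem_componentIn : y ∈ G.componentIn A x ↔ G.ReachableIn A x y := by
  simp [componentIn]

lemma mem_largeComponentVerts {C : ℕ} :
    x ∈ G.largeComponentVerts C A ↔ C < #(G.componentIn A x) := by
  simp [largeComponentVerts]

lemma self_mem_componentIn (hx : x ∈ A) : x ∈ G.componentIn A x :=
  mem_componentIn.2 (.refl hx)

lemma mem_of_lt_card_componentIn {C : ℕ} (h : C < #(G.componentIn A x)) : x ∈ A := by
  obtain ⟨y, hy⟩ := card_pos.1 (Nat.zero_lt_of_lt h)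
  exact (mem_componentIn.1 hy).mem_left

lemma componentIn_subset : G.componentIn A x ⊆ A :=
  fun _ hy => (mem_componentIn.1 hy).mem_right

lemma componentIn_mono (hAB : A ⊆ B) : G.componentIn A x ⊆ G.componentIn B x :=
  fun _ hy => mem_componentIn.2 ((mem_componentIn.1 hy).mono hAB)

lemma componentIn_eq_of_mem (hy : y ∈ G.componentIn A x) :
    G.componentIn A y = G.componentIn A x := by
  ext z
  simp only [mem_componentIn]
  exact ⟨(mem_componentIn.1 hy).trans, (mem_componentIn.1 hy).symm.trans⟩

lemma ncard_supp_connectedComponentMk (x : (A : Set V)) :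
    ((G.induce A).connectedComponentMk x).supp.ncard = #(G.componentIn A x) := by
  have himage :
      Subtype.val '' ((G.induce A).connectedComponentMk x).supp = G.componentIn A x := by
    ext y
    simp only [Set.mem_image, ConnectedComponent.mem_supp_iff, ConnectedComponent.eq,
      reachable_induce_iff_reachableIn, mem_coe, mem_componentIn]
    exact ⟨fun ⟨y, hy, hyx⟩ => hyx ▸ hy.symm, fun h => ⟨⟨y, h.mem_right⟩, h.symm, rfl⟩⟩
  rw [← Set.ncard_image_of_injective _ Subtype.val_injective, himage, Set.ncard_coe_finset]

lemma componentIn_subset_largeComponentVerts {C : ℕ} (hBA : B ⊆ A)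
    (hlarge : C < #(G.componentIn B x)) : G.componentIn B x ⊆ G.largeComponentVerts C A := by
  intro y hy
  rw [mem_largeComponentVerts]
  calc C < #(G.componentIn B x) := hlarge
    _ = #(G.componentIn B y) := by rw [componentIn_eq_of_mem hy]
    _ ≤ #(G.componentIn A y) := card_le_card (componentIn_mono hBA)

lemma largeComponentVerts_mono {C : ℕ} (hAB : A ⊆ B) :
    G.largeComponentVerts C A ⊆ G.largeComponentVerts C B := fun _ hx =>
  mem_largeComponentVerts.2 <|
    (mem_largeComponentVerts.1 hx).trans_le (card_le_card (componentIn_mono hAB))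

section Dismantling

variable [DecidableEq V] {C : ℕ} {u w : V}

lemma componentIn_erase_subset_erase (hz : z ∈ G.componentIn (A.erase u) y)
    (hw : ∀ v ∈ G.componentIn (A.erase u) y, G.Adj u v → v = w) :
    G.componentIn (A.erase w) z ⊆ (G.componentIn (A.erase u) y).erase w := by
  intro t ht
  obtain ⟨p, hp⟩ := mem_componentIn.1 ht
  refine mem_erase.2 ⟨(mem_erase.1 (hp t p.end_mem_support)).1, ?_⟩
  rw [← componentIn_eq_of_mem hz, mem_componentIn]
  -- A walk from `z` avoiding `w` that reached `u` would enter it from a neighbour in `X` other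
  -- than `w`.
  refine ⟨p, fun s hs => mem_erase.2 ⟨fun hsu => ?_, mem_of_mem_erase (hp s hs)⟩⟩
  rw [hsu] at hs
  have huz : u ≠ z := (mem_erase.1 (componentIn_subset hz)).1.symm
  obtain ⟨v, huv, hvz⟩ :=
    (ReachableIn.of_mem_support hp hs).symm.exists_adj_reachableIn_erase huz
  have hvX : v ∈ G.componentIn (A.erase u) y := by
    rw [← componentIn_eq_of_mem hz, mem_componentIn]
    exact (hvz.mono (erase_subset_erase u (erase_subset w A))).symm
  exact (mem_erase.1 (mem_of_mem_erase hvz.mem_left)).1 (hw v hvX huv)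

lemma exists_forall_adj_mem_componentIn_erase_eq (hA : (G.induce (A : Set V)).IsAcyclic)
    (hu : u ∈ A) (hy : y ∈ A.erase u) :
    ∃ w ∈ G.componentIn (A.erase u) y,
      ∀ v ∈ G.componentIn (A.erase u) y, G.Adj u v → v = w := by
  by_cases h : ∃ w ∈ G.componentIn (A.erase u) y, G.Adj u w
  · obtain ⟨w, hw, huw⟩ := h
    refine ⟨w, hw, fun v hv huv => eq_of_adj_of_reachableIn_erase hA hu huv huw ?_⟩
    exact (mem_componentIn.1 hv).symm.trans (mem_componentIn.1 hw)
  · push Not at h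
    exact ⟨y, self_mem_componentIn hy, fun v hv huv => absurd huv (h v hv)⟩

lemma exists_largeComponentVerts_forall_card_componentIn_erase_le
    (hA : (G.induce (A : Set V)).IsAcyclic) (hx : C < #(G.componentIn A x)) :
    ∃ w ∈ A, ∃ X ⊆ G.largeComponentVerts C A, C < #X ∧
      ∀ z ∈ X, #(G.componentIn (A.erase w) z) ≤ C := by
  let P := (A ×ˢ univ).filter fun q : V × V => C < #(G.componentIn (A.erase q.1) q.2)
  rcases P.eq_empty_or_nonempty with hP | hP
  · have hxA : x ∈ A := mem_of_lt_card_componentIn hx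
    refine ⟨x, hxA, _, componentIn_subset_largeComponentVerts subset_rfl hx, hx,
      fun z _ => not_lt.1 fun hz => ?_⟩
    have hxz : (x, z) ∈ P := by simp [P, hxA, hz]
    simp [hP] at hxz
  obtain ⟨⟨u, y⟩, huy, hmin⟩ :=
    exists_min_image P (fun q => #(G.componentIn (A.erase q.1) q.2)) hP
  obtain ⟨hu, hX⟩ : u ∈ A ∧ C < #(G.componentIn (A.erase u) y) := by simpa [P] using huy
  have hy : y ∈ A.erase u := mem_of_lt_card_componentIn hX
  obtain ⟨w, hwX, hw⟩ := exists_forall_adj_mem_componentIn_erase_eq hA hu hy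
  refine ⟨w, mem_of_mem_erase (componentIn_subset hwX), _,
    componentIn_subset_largeComponentVerts (erase_subset u A) hX, hX,
    fun z hz => not_lt.1 fun hlarge => ?_⟩
  have hle := hmin (w, z) (by simpa [P, mem_of_mem_erase (componentIn_subset hwX)] using hlarge)
  have hlt := card_lt_card ((componentIn_erase_subset_erase hz hw).trans_ssubset
    (erase_ssubset hwX))
  exact hle.not_gt hlt

lemma exists_card_largeComponentVerts_erase_add_lt (hA : (G.induce (A : Set V)).IsAcyclic)
    (hx : C < #(G.componentIn A x)) :
    ∃ w ∈ A, #(G.largeComponentVerts C (A.erase w)) + C < #(G.largeComponentVerts C A) := by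
  obtain ⟨w, hw, X, hXA, hX, hsmall⟩ :=
    exists_largeComponentVerts_forall_card_componentIn_erase_le hA hx
  have hsub : G.largeComponentVerts C (A.erase w) ⊆ G.largeComponentVerts C A \ X :=
    fun z hz => mem_sdiff.2 ⟨largeComponentVerts_mono (erase_subset w A) hz,
      fun hzX => (hsmall z hzX).not_gt (mem_largeComponentVerts.1 hz)⟩
  refine ⟨w, hw, ?_⟩
  calc #(G.largeComponentVerts C (A.erase w)) + C
      < #(G.largeComponentVerts C A \ X) + #X := add_lt_add_of_le_of_lt (card_le_card hsub) hX
    _ = #(G.largeComponentVerts C A) := card_sdiff_add_card_eq_card hXA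

lemma exists_subset_forall_card_componentIn_sdiff_le (C : ℕ) (A : Finset V)
    (hA : (G.induce (A : Set V)).IsAcyclic) :
    ∃ W ⊆ A, (∀ x, #(G.componentIn (A \ W) x) ≤ C) ∧
      (C + 1) * #W ≤ #(G.largeComponentVerts C A) := by
  induction A using Finset.strongInduction with | H A ih =>
  by_cases hsmall : ∀ x, #(G.componentIn A x) ≤ C
  · exact ⟨∅, empty_subset A, by simpa using hsmall, by simp⟩
  push Not at hsmall
  obtain ⟨x, hx⟩ := hsmall
  obtain ⟨w, hw, hcard⟩ := exists_card_largeComponentVerts_erase_add_lt hA hx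
  obtain ⟨W, hWA, hWsmall, hWcard⟩ := ih (A.erase w) (erase_ssubset hw)
    (hA.embedding (G.induceHomOfLE (coe_subset.2 (erase_subset w A))))
  have hwW : w ∉ W := fun h => (mem_erase.1 (hWA h)).1 rfl
  refine ⟨insert w W, insert_subset hw (hWA.trans (erase_subset w A)), ?_, ?_⟩
  · rwa [sdiff_insert, ← erase_sdiff_comm]
  · rw [card_insert_of_notMem hwW, mul_add_one]
    omega

end Dismantling

end Components

end SimpleGraph

theorem decycling_extends_to_dismantling_general {V : Type*} [Fintype V] [DecidableEq V]
    (G : SimpleGraph V) (C : ℕ)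
    (S₀ : Finset V) (h₀ : (G.induce ((↑S₀ : Set V)ᶜ)).IsAcyclic) :
    ∃ S : Finset V, S₀ ⊆ S ∧
      (∀ c : (G.induce ((↑S : Set V)ᶜ)).ConnectedComponent, c.supp.ncard ≤ C) ∧
      (C + 1) * (S.card - S₀.card) ≤ Fintype.card V := by
  rw [← coe_compl] at h₀
  obtain ⟨W, hW, hsmall, hcard⟩ :=
    G.exists_subset_forall_card_componentIn_sdiff_le C S₀ᶜ h₀
  refine ⟨S₀ ∪ W, subset_union_left, ?_, ?_⟩
  · rw [← coe_compl, compl_union, ← sdiff_eq_inter_compl]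
    refine ConnectedComponent.ind fun x => ?_
    rw [ncard_supp_connectedComponentMk]
    exact hsmall x
  · rw [card_union_of_disjoint (disjoint_of_subset_right hW disjoint_compl_right),
      Nat.add_sub_cancel_left]
    exact hcard.trans (card_le_univ _)

/-- any decycling set `S₀` of a graph on `N` vertices can be extended
to a `C`-dismantling set `S` with `(C+1)·(|S| − |S₀|) ≤ N`. -/
theorem decycling_extends_to_dismantling {V : Type*} [Fintype V] [DecidableEq V]
    (G : SimpleGraph V) (C : ℕ) (hC : 1 ≤ C)
    (S₀ : Finset V) (h₀ : (G.induce ((↑S₀ : Set V)ᶜ)).IsAcyclic) :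
    ∃ S : Finset V, S₀ ⊆ S ∧
      (∀ c : (G.induce ((↑S : Set V)ᶜ)).ConnectedComponent, c.supp.ncard ≤ C) ∧
      (C + 1) * (S.card - S₀.card) ≤ Fintype.card V :=
  decycling_extends_to_dismantling_general G C S₀ h₀
end

section
/- Let G be a finite simple graph on vertex set V, let c ≥ 2 and F be integers, and let c'' be an integer with c ≤ c'' < 2c. Let G' be the graph obtained from G by attaching c−1 new pendant leaves to each vertex. Then G has a vertex cover of size at most F if and only if there exists a set S of vertices of G' with |S| ≤ F such that every connected component of G'∖S has at most c'' vertices. -/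
/-!
Call the `c` vertices `inl v` and `inr (v, i)` of `G'` the star of `v`. If `W` covers the edges
of `G`, then after deleting the copies of `W` no edge of `G'` joins two different stars, so every
component lies inside a star and has at most `c ≤ c''` vertices. Conversely, the vertices of `G`
whose stars meet `S` form a set of size at most `|S|`; if it missed an edge `uv`, the stars of
`u` and `v` would survive intact and lie in one component with `2c > c''` vertices.
-/

/-- The graph obtained from `G` by attaching `c-1` new pendant leaves to each vertex. -/
def addLeaves {V : Type*} (G : SimpleGraph V) (c : ℕ) :
    SimpleGraph (V ⊕ V × Fin (c - 1)) :=
  SimpleGraph.fromRel (fun x y =>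
    match x, y with
    | Sum.inl u, Sum.inl v => G.Adj u v
    | Sum.inl v, Sum.inr (w, _) => v = w
    | _, _ => False)

open SimpleGraph

theorem SimpleGraph.Reachable.eq_of_forall_adj {α β : Type*} {H : SimpleGraph α} {f : α → β}
    (hf : ∀ a b, H.Adj a b → f a = f b) {a b : α} (h : H.Reachable a b) : f a = f b := by
  obtain ⟨p⟩ := h
  induction p with
  | nil => rfl
  | cons hadj _ ih => exact (hf _ _ hadj).trans ih

theorem SimpleGraph.ConnectedComponent.exists_supp_subset_preimage {α β : Type*}
    {H : SimpleGraph α} {f : α → β} (hf : ∀ a b, H.Adj a b → f a = f b)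
    (C : H.ConnectedComponent) : ∃ b, C.supp ⊆ f ⁻¹' {b} := by
  obtain ⟨a, rfl⟩ := C.exists_rep
  exact ⟨f a, fun x hx => (ConnectedComponent.exact hx).eq_of_forall_adj hf⟩

namespace addLeaves

variable {V : Type*} {G : SimpleGraph V} {c : ℕ}

def root : V ⊕ V × Fin (c - 1) → V := Sum.elim id Prod.fst

@[simp] lemma root_inl (v : V) : root (c := c) (Sum.inl v) = v := rfl

@[simp] lemma root_inr (p : V × Fin (c - 1)) : root (Sum.inr p) = p.1 := rfl

@[simp] lemma adj_inl_inl {u v : V} :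
    (addLeaves G c).Adj (Sum.inl u) (Sum.inl v) ↔ G.Adj u v := by
  simp [addLeaves, G.adj_comm v u]
  exact Adj.ne

lemma adj_inl_inr (v : V) (i : Fin (c - 1)) :
    (addLeaves G c).Adj (Sum.inl v) (Sum.inr (v, i)) := by
  simp [addLeaves]

lemma exists_adj_of_adj_of_root_ne {x y : V ⊕ V × Fin (c - 1)} (h : (addLeaves G c).Adj x y)
    (hne : root x ≠ root y) : ∃ u v, G.Adj u v ∧ x = Sum.inl u ∧ y = Sum.inl v := by
  rcases x with u | ⟨u, i⟩ <;> rcases y with v | ⟨v, j⟩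
  · exact ⟨u, v, adj_inl_inl.mp h, rfl, rfl⟩
  all_goals simp_all [addLeaves]

lemma ncard_root_fiber (hc : 0 < c) (v : V) :
    (root ⁻¹' {v} : Set (V ⊕ V × Fin (c - 1))).ncard = c := by
  have hfiber : (root ⁻¹' {v} : Set (V ⊕ V × Fin (c - 1))) =
      insert (Sum.inl v) (Set.range fun i => Sum.inr (v, i)) := by
    ext (w | ⟨w, i⟩) <;> simp [eq_comm]
  rw [hfiber, Set.ncard_insert_of_notMem (by simp),
    Set.ncard_range_of_injective (fun i j h => by simpa using h), Nat.card_eq_fintype_card,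
    Fintype.card_fin]
  omega

lemma reachable_inl_root {S : Set (V ⊕ V × Fin (c - 1))} {x : V ⊕ V × Fin (c - 1)}
    (hx : x ∈ Sᶜ) (hr : Sum.inl (root x) ∈ Sᶜ) :
    ((addLeaves G c).induce Sᶜ).Reachable ⟨_, hr⟩ ⟨x, hx⟩ := by
  rcases x with v | ⟨v, i⟩
  · rfl
  · exact Adj.reachable (by simpa using adj_inl_inr v i)

variable [Finite V]

lemma ncard_supp_le_of_isVertexCover (hc : 0 < c) {W : Set V} (hW : G.IsVertexCover W)
    (C : ((addLeaves G c).induce (Sum.inl '' W)ᶜ).ConnectedComponent) : C.supp.ncard ≤ c := by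
  have hroot : ∀ x y : ↥(Sum.inl '' W)ᶜ, ((addLeaves G c).induce (Sum.inl '' W)ᶜ).Adj x y →
      root x.1 = root y.1 := by
    rintro ⟨x, hx⟩ ⟨y, hy⟩ hxy
    by_contra hne
    obtain ⟨u, v, huv, rfl, rfl⟩ := exists_adj_of_adj_of_root_ne hxy hne
    rcases hW huv with hu | hv
    · exact hx ⟨u, hu, rfl⟩
    · exact hy ⟨v, hv, rfl⟩
  obtain ⟨v, hv⟩ := C.exists_supp_subset_preimage hroot
  calc C.supp.ncard = (Subtype.val '' C.supp).ncard :=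
        (Set.ncard_image_of_injective _ Subtype.val_injective).symm
    _ ≤ (root ⁻¹' {v}).ncard := Set.ncard_le_ncard (by rintro _ ⟨x, hx, rfl⟩; exact hv hx)
    _ = c := ncard_root_fiber hc v

lemma isVertexCover_image_root (hc : 0 < c) {S : Set (V ⊕ V × Fin (c - 1))}
    (hS : ∀ C : ((addLeaves G c).induce Sᶜ).ConnectedComponent, C.supp.ncard < 2 * c) :
    G.IsVertexCover (root '' S) := by
  intro u v huv
  by_contra! hcov
  have hfiber : root ⁻¹' {u, v} ⊆ Sᶜ := by
    rintro x (hx | hx) hxS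
    · exact hcov.1 ⟨x, hxS, hx⟩
    · exact hcov.2 ⟨x, hxS, hx⟩
  have hu : Sum.inl u ∈ Sᶜ := hfiber (a := Sum.inl u) (Or.inl rfl)
  have hreach : ∀ x (hx : x ∈ root ⁻¹' {u, v}),
      ((addLeaves G c).induce Sᶜ).Reachable ⟨x, hfiber hx⟩ ⟨_, hu⟩ := by
    rintro x (rfl | rfl)
    · exact (reachable_inl_root _ hu).symm
    · exact (reachable_inl_root _ (hfiber (a := Sum.inl (root x)) (Or.inr rfl))).symm.trans
        (Adj.reachable (by simpa using huv.symm))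
  set C := ((addLeaves G c).induce Sᶜ).connectedComponentMk ⟨_, hu⟩
  have hsupp : root ⁻¹' {u, v} ⊆ Subtype.val '' C.supp := fun x hx =>
    ⟨⟨x, hfiber hx⟩, ConnectedComponent.sound (hreach x hx), rfl⟩
  have hcard : (root ⁻¹' {u, v} : Set (V ⊕ V × Fin (c - 1))).ncard = 2 * c := by
    rw [Set.insert_eq, Set.preimage_union, Set.ncard_union_eq
      ((Set.disjoint_singleton.mpr huv.ne).preimage root), ncard_root_fiber hc,
      ncard_root_fiber hc, two_mul]
  refine (hS C).not_ge ?_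
  calc 2 * c = (root ⁻¹' {u, v}).ncard := hcard.symm
    _ ≤ (Subtype.val '' C.supp).ncard := Set.ncard_le_ncard hsupp
    _ = C.supp.ncard := Set.ncard_image_of_injective _ Subtype.val_injective

end addLeaves

theorem vertexCover_iff_dismantling_general {V : Type*} [Fintype V]
    (G : SimpleGraph V) (c c'' F : ℕ)
    (h1 : c ≤ c'') (h2 : c'' < 2 * c) :
    (∃ W : Set V, (∀ u v : V, G.Adj u v → u ∈ W ∨ v ∈ W) ∧ W.ncard ≤ F) ↔
    (∃ S : Set (V ⊕ V × Fin (c - 1)), S.ncard ≤ F ∧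
      ∀ comp : ((addLeaves G c).induce (Sᶜ :
          Set (V ⊕ V × Fin (c - 1)))).ConnectedComponent,
        comp.supp.ncard ≤ c'') := by
  have hc : 0 < c := by omega
  constructor
  · rintro ⟨W, hW, hWF⟩
    refine ⟨Sum.inl '' W, by rwa [Set.ncard_image_of_injective _ Sum.inl_injective], ?_⟩
    exact fun C => (addLeaves.ncard_supp_le_of_isVertexCover hc (fun u v => hW u v) C).trans h1
  · rintro ⟨S, hSF, hS⟩
    refine ⟨addLeaves.root '' S, ?_, (Set.ncard_image_le S.toFinite).trans hSF⟩
    exact addLeaves.isVertexCover_image_root hc fun C => (hS C).trans_lt h2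

/-- for `c ≤ c'' < 2c`, `G` has a vertex cover of size at most `F` iff
`G'` (the graph with `c-1` pendant leaves attached to each vertex of `G`) has a
`c''`-dismantling set of size at most `F`. -/
theorem vertexCover_iff_dismantling {V : Type*} [Fintype V]
    (G : SimpleGraph V) (c c'' F : ℕ) (hc : 2 ≤ c)
    (h1 : c ≤ c'') (h2 : c'' < 2 * c) :
    (∃ W : Set V, (∀ u v : V, G.Adj u v → u ∈ W ∨ v ∈ W) ∧ W.ncard ≤ F) ↔
    (∃ S : Set (V ⊕ V × Fin (c - 1)), S.ncard ≤ F ∧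
      ∀ comp : ((addLeaves G c).induce (Sᶜ :
          Set (V ⊕ V × Fin (c - 1)))).ConnectedComponent,
        comp.supp.ncard ≤ c'') :=
  vertexCover_iff_dismantling_general G c c'' F h1 h2
end
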